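/- Let C be a symmetric n×n real matrix and let 0 < δ < 1/3. Define the grid D_δ = {x = (x₁,…,x_n) ∈ R^n : ‖x‖₂ ≤ 1 and (√n·x_i)/δ ∈ Z for every i}. Then ‖C‖ ≤ (1 − 3δ)^{−1}·max_{x ∈ D_δ} |xᵀ·C·x|, where ‖·‖ denotes the spectral norm. -/

import Mathlib

/-!
Rounding each coordinate of a unit vector toward zero to the nearest multiple of `δ / √n` lands
in the grid `D_δ`, does not increase the norm, and moves the vector by at most `δ`. Hence
`|xᵀCx|` on the unit sphere exceeds its maximum over `D_δ` by at most `2δ‖C‖`. For symmetric `C`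
the norm is the supremum of `|xᵀCx|` over the unit sphere, so `(1 - 2δ)‖C‖ ≤ max_{D_δ} |xᵀCx|`.
-/

open MeasureTheory ProbabilityTheory Finset Matrix Filter

noncomputable section

namespace HSBM

/-- The set of (hyper)edges: all `d`-element subsets of `[n]`. -/
def edgeSet (n d : ℕ) : Finset (Finset (Fin n)) :=
  (Finset.univ : Finset (Fin n)).powersetCard d

/-- An edge is homogeneous w.r.t. a partition `Ψ` if all its nodes lie in one group. -/
def homogeneous {n k : ℕ} (Ψ : Fin n → Fin k) (e : Finset (Fin n)) : Prop :=
  ∀ i ∈ e, ∀ j ∈ e, Ψ i = Ψ j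

/-- Similarity matrix built from the weights of the edges in `E₁` only. -/
def simMatrixOn {n : ℕ} (d : ℕ) (E₁ : Finset (Finset (Fin n))) (W : Finset (Fin n) → ℝ) :
    Matrix (Fin n) (Fin n) ℝ := fun i j =>
  if i = j then 0
  else ∑ e ∈ edgeSet n d ∩ E₁, if ({i, j} : Finset (Fin n)) ⊆ e then W e else 0

/-- Similarity matrix `A` of a weighted hypergraph. -/
def simMatrix {n : ℕ} (d : ℕ) (W : Finset (Fin n) → ℝ) : Matrix (Fin n) (Fin n) ℝ :=
  simMatrixOn d (edgeSet n d) W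

/-- Processed similarity matrix `A⁰`: rows (and columns) whose sum exceeds
`c_thr · (1/n) · Σ_{i,j} A_{ij}` are zeroed out. -/
def processed {n : ℕ} (cthr : ℝ) (A : Matrix (Fin n) (Fin n) ℝ) : Matrix (Fin n) (Fin n) ℝ :=
  fun i j =>
    if cthr * ((1 : ℝ) / n) * ∑ a, ∑ b, A a b < ∑ l, A i l ∨
        cthr * ((1 : ℝ) / n) * ∑ a, ∑ b, A a b < ∑ l, A j l then 0
    else A i j

/-- `U` is an `n × k` matrix whose columns are orthonormal eigenvectors of `M`
associated with its `k` largest eigenvalues. -/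
def IsTopEigen {n k : ℕ} (M : Matrix (Fin n) (Fin n) ℝ) (U : Matrix (Fin n) (Fin k) ℝ) : Prop :=
  ∃ (v : Fin n → Fin n → ℝ) (lam : Fin n → ℝ),
    (∀ a b : Fin n, v a ⬝ᵥ v b = if a = b then (1 : ℝ) else 0) ∧
    (∀ a : Fin n, M.mulVec (v a) = lam a • v a) ∧
    (∀ a b : Fin n, a ≤ b → lam b ≤ lam a) ∧
    (∀ (j : Fin k) (hj : (j : ℕ) < n) (i : Fin n), U i j = v ⟨j, hj⟩ i)

def clusterOf {n k : ℕ} (Φ : Fin n → Fin k) (j : Fin k) : Finset (Fin n) :=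
  Finset.univ.filter fun i => Φ i = j

/-- `k`-means cost of a partition `Φ` of the rows of `U`. -/
def kmCost {n k : ℕ} (U : Matrix (Fin n) (Fin k) ℝ) (Φ : Fin n → Fin k) : ℝ :=
  ∑ j : Fin k, ∑ i ∈ clusterOf Φ j,
    ∑ m : Fin k,
      (U i m - (1 / ((clusterOf Φ j).card : ℝ)) * ∑ l ∈ clusterOf Φ j, U l m) ^ 2

/-- `Φ` is a `(1+ε)`-approximate `k`-means solution for the rows of `U`. -/
def IsApproxKMeans {n k : ℕ} (ε : ℝ) (U : Matrix (Fin n) (Fin k) ℝ) (Φ : Fin n → Fin k) : Prop :=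
  ∀ Φ' : Fin n → Fin k, kmCost U Φ ≤ (1 + ε) * kmCost U Φ'

/-- `Φ` is an output of HSC run on the edges in `E₁`. -/
def IsHSCOutputOn {n k : ℕ} (d : ℕ) (cthr ε : ℝ) (E₁ : Finset (Finset (Fin n)))
    (W : Finset (Fin n) → ℝ) (Φ : Fin n → Fin k) : Prop :=
  ∃ U : Matrix (Fin n) (Fin k) ℝ,
    IsTopEigen (processed cthr (simMatrixOn d E₁ W)) U ∧ IsApproxKMeans ε U Φ

/-- `Φ` is an output of HSC. -/
def IsHSCOutput {n k : ℕ} (d : ℕ) (cthr ε : ℝ) (W : Finset (Fin n) → ℝ)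
    (Φ : Fin n → Fin k) : Prop :=
  IsHSCOutputOn d cthr ε (edgeSet n d) W Φ

/-- `E^{(i)}(j)`: the edges of `E₂` containing `i` whose other nodes all lie in `Φ₀⁻¹(j)`. -/
def refineEdges {n k : ℕ} (E₂ : Finset (Finset (Fin n))) (Φ₀ : Fin n → Fin k)
    (i : Fin n) (j : Fin k) : Finset (Finset (Fin n)) :=
  E₂.filter fun e => i ∈ e ∧ ∀ l ∈ e, l ≠ i → Φ₀ l = j

/-- Average weight over `E^{(i)}(j)`. -/
def avgWeight {n k : ℕ} (W : Finset (Fin n) → ℝ) (E₂ : Finset (Finset (Fin n)))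
    (Φ₀ : Fin n → Fin k) (i : Fin n) (j : Fin k) : ℝ :=
  (∑ e ∈ refineEdges E₂ Φ₀ i j, W e) / ((refineEdges E₂ Φ₀ i j).card : ℝ)

/-- `Φ` is an output of HSCLR given realized weights `W` and split indicators `ξ`
(`ξ e = 1` iff `e ∈ E₁`). -/
def IsHSCLROutput {n k : ℕ} (d : ℕ) (cthr ε : ℝ) (W : Finset (Fin n) → ℝ)
    (ξ : Finset (Fin n) → ℝ) (Φ : Fin n → Fin k) : Prop :=
  ∃ Φ₀ : Fin n → Fin k,
    IsHSCOutputOn d cthr ε ((edgeSet n d).filter fun e => ξ e = 1) W Φ₀ ∧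
    ∀ (i : Fin n) (j : Fin k),
      avgWeight W ((edgeSet n d).filter fun e => ξ e ≠ 1) Φ₀ i j ≤
        avgWeight W ((edgeSet n d).filter fun e => ξ e ≠ 1) Φ₀ i (Φ i)

/-- Error fraction `err(Φ)`. -/
def errFrac {n k : ℕ} (Ψ Φ : Fin n → Fin k) : ℝ :=
  (⨅ π : Equiv.Perm (Fin k),
    ((Finset.univ.filter fun i => Ψ i ≠ π (Φ i)).card : ℝ)) / n

/-- Size of the `j`-th cluster. -/
def csize {n k : ℕ} (Ψ : Fin n → Fin k) (j : Fin k) : ℕ :=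
  (Finset.univ.filter fun i => Ψ i = j).card

def nmin {n k : ℕ} (Ψ : Fin n → Fin k) : ℕ := sInf (Set.range fun j => csize Ψ j)

def nmax {n k : ℕ} (Ψ : Fin n → Fin k) : ℕ := sSup (Set.range fun j => csize Ψ j)

/-- Worst-cluster error fraction `errr(Φ)`. -/
def errrFrac {n k : ℕ} (Ψ Φ : Fin n → Fin k) : ℝ :=
  ⨅ π : Equiv.Perm (Fin k), ⨆ j : Fin k,
    ((Finset.univ.filter fun i => Ψ i = j ∧ π (Φ i) ≠ j).card : ℝ) / (csize Ψ j : ℝ)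

/-- Membership matrix `Z` of a partition `Ψ`. -/
def memMatrix {n k : ℕ} (Ψ : Fin n → Fin k) : Matrix (Fin n) (Fin k) ℝ :=
  fun i j => if Ψ i = j then 1 else 0

/-- Spectral norm of a real square matrix. -/
def specNorm {n : ℕ} (M : Matrix (Fin n) (Fin n) ℝ) : ℝ :=
  ‖Matrix.toEuclideanCLM (𝕜 := ℝ) M‖

/-- Smallest nonzero singular value of a real square matrix. -/
def sigmaNZmin {m : ℕ} (M : Matrix (Fin m) (Fin m) ℝ) : ℝ :=
  sInf {r : ℝ | r ≠ 0 ∧ ∃ i : Fin m,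
    r = Real.sqrt ((Matrix.isHermitian_iff_isSymm.mpr (Matrix.isSymm_transpose_mul_self M)).eigenvalues i)}

/-- Smallest singular value of a real square matrix. -/
def sigmaMin {m : ℕ} (M : Matrix (Fin m) (Fin m) ℝ) : ℝ :=
  sInf {r : ℝ | ∃ i : Fin m,
    r = Real.sqrt ((Matrix.isHermitian_iff_isSymm.mpr (Matrix.isSymm_transpose_mul_self M)).eigenvalues i)}

/-- `den_M(S,T) = Σ_{i∈S} Σ_{j∈T} M_{ij}`. -/
def den {n : ℕ} (M : Matrix (Fin n) (Fin n) ℝ) (S T : Finset (Fin n)) : ℝ :=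
  ∑ i ∈ S, ∑ j ∈ T, M i j

/-- `f_e(X) = 1` if all coordinates of `X` indexed by `e` agree, and `0` otherwise. -/
def fval {nn : ℕ} (X : Fin nn → Bool) (e : Finset (Fin nn)) : ℝ :=
  if ∀ i ∈ e, ∀ j ∈ e, X i = X j then 1 else 0

/-- An instance of the weighted stochastic block model on a measurable space `Ω`. -/
structure WSBM (n d k : ℕ) (p q : ℝ) (Ω : Type*) [MeasurableSpace Ω] where
  μ : Measure Ω
  prob : IsProbabilityMeasure μ
  Ψ : Fin n → Fin k
  surj : Function.Surjective Ψ
  α : ℝ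
  α_pos : 0 < α
  α_le_one : α ≤ 1
  W : Finset (Fin n) → Ω → ℝ
  W_meas : ∀ e, Measurable (W e)
  W_range : ∀ e, ∀ᵐ ω ∂μ, W e ω ∈ Set.Icc (0 : ℝ) 1
  W_indep : iIndepFun W μ
  W_homo : ∀ e ∈ edgeSet n d, homogeneous Ψ e → ∫ ω, W e ω ∂μ = p * α
  W_hetero : ∀ e ∈ edgeSet n d, ¬ homogeneous Ψ e → ∫ ω, W e ω ∂μ = q * α

end HSBM

namespace ContinuousLinearMap

theorem norm_le_of_forall_norm_eq_one_abs_re_inner_le {𝕜 E : Type*} [RCLike 𝕜]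
    [NormedAddCommGroup E] [InnerProductSpace 𝕜 E] {T : E →L[𝕜] E} (hT : T.IsSymmetric)
    {B : ℝ} (hB : 0 ≤ B) (h : ∀ x, ‖x‖ = 1 → |RCLike.re (inner 𝕜 (T x) x)| ≤ B) : ‖T‖ ≤ B := by
  rw [T.norm_eq_iSup_rayleighQuotient hT]
  refine ciSup_le fun x => ?_
  rcases eq_or_ne x 0 with rfl | hx
  · simpa using hB
  have hc : ((‖x‖⁻¹ : ℝ) : 𝕜) ≠ 0 := by simpa using hx
  have hu : ‖((‖x‖⁻¹ : ℝ) : 𝕜) • x‖ = 1 := by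
    rw [norm_smul, RCLike.norm_ofReal, abs_inv, abs_norm, inv_mul_cancel₀ (norm_ne_zero_iff.mpr hx)]
  rw [← T.rayleigh_smul x hc, rayleighQuotient, reApplyInnerSelf_apply, hu, one_pow, div_one]
  exact h _ hu

theorem abs_inner_apply_self_sub_le {F : Type*} [NormedAddCommGroup F] [InnerProductSpace ℝ F]
    (T : F →L[ℝ] F) (x y : F) :
    |inner ℝ (T x) x - inner ℝ (T y) y| ≤ ‖T‖ * (‖x‖ + ‖y‖) * ‖x - y‖ := by
  have hsplit : inner ℝ (T x) x - inner ℝ (T y) y =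
      inner ℝ (T (x - y)) x + inner ℝ (T y) (x - y) := by
    simp only [map_sub, inner_sub_left, inner_sub_right]
    ring
  calc |inner ℝ (T x) x - inner ℝ (T y) y|
      ≤ |inner ℝ (T (x - y)) x| + |inner ℝ (T y) (x - y)| := by rw [hsplit]; exact abs_add_le _ _
    _ ≤ ‖T (x - y)‖ * ‖x‖ + ‖T y‖ * ‖x - y‖ :=
        add_le_add (abs_real_inner_le_norm _ _) (abs_real_inner_le_norm _ _)
    _ ≤ ‖T‖ * ‖x - y‖ * ‖x‖ + ‖T‖ * ‖y‖ * ‖x - y‖ := by gcongr <;> exact T.le_opNorm _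
    _ = ‖T‖ * (‖x‖ + ‖y‖) * ‖x - y‖ := by ring

theorem abs_inner_apply_self_le {F : Type*} [NormedAddCommGroup F] [InnerProductSpace ℝ F]
    (T : F →L[ℝ] F) (x : F) : |inner ℝ (T x) x| ≤ ‖T‖ * ‖x‖ ^ 2 := by
  simpa [sq, mul_assoc] using T.abs_inner_apply_self_sub_le x 0

end ContinuousLinearMap

def truncZero (t : ℝ) : ℤ := if 0 ≤ t then ⌊t⌋ else ⌈t⌉

theorem abs_truncZero_le (t : ℝ) : |(truncZero t : ℝ)| ≤ |t| := by
  unfold truncZero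
  split_ifs with ht
  · rw [abs_of_nonneg ht, abs_of_nonneg (by exact_mod_cast Int.floor_nonneg.mpr ht)]
    exact Int.floor_le t
  · rw [not_le] at ht
    rw [abs_of_neg ht, abs_of_nonpos (by exact_mod_cast Int.ceil_le.mpr (by exact_mod_cast ht.le))]
    exact neg_le_neg (Int.le_ceil t)

theorem abs_sub_truncZero_le (t : ℝ) : |t - truncZero t| ≤ 1 := by
  unfold truncZero
  split_ifs
  · rw [abs_le]; constructor <;> linarith [Int.floor_le t, Int.lt_floor_add_one t]
  · rw [abs_le]; constructor <;> linarith [Int.le_ceil t, Int.ceil_lt_add_one t]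

namespace EuclideanSpace

variable {ι : Type*} [Fintype ι]

theorem norm_le_norm_of_forall_abs_le {x y : EuclideanSpace ℝ ι} (h : ∀ i, |x i| ≤ |y i|) :
    ‖x‖ ≤ ‖y‖ := by
  rw [EuclideanSpace.norm_eq, EuclideanSpace.norm_eq]
  gcongr with i
  simpa only [Real.norm_eq_abs] using h i

theorem norm_le_sqrt_card_mul {x : EuclideanSpace ℝ ι} {c : ℝ} (h : ∀ i, |x i| ≤ c) :
    ‖x‖ ≤ √(Fintype.card ι) * c := by
  rcases isEmpty_or_nonempty ι with hι | ⟨⟨i⟩⟩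
  · simp [Subsingleton.elim x 0]
  have hc : 0 ≤ c := (abs_nonneg _).trans (h i)
  rw [EuclideanSpace.norm_eq, ← Real.sqrt_sq hc, ← Real.sqrt_mul (Nat.cast_nonneg _)]
  gcongr
  calc ∑ i, ‖x i‖ ^ 2 ≤ ∑ _i : ι, c ^ 2 := by
        gcongr with i
        rw [Real.norm_eq_abs]; exact h i
    _ = _ := by simp

theorem exists_lattice_point_near {h : ℝ} (hh : 0 < h) (x : EuclideanSpace ℝ ι) :
    ∃ z : ι → ℤ, ‖WithLp.toLp 2 (fun i => (z i : ℝ) * h)‖ ≤ ‖x‖ ∧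
      ‖x - WithLp.toLp 2 (fun i => (z i : ℝ) * h)‖ ≤ √(Fintype.card ι) * h := by
  refine ⟨fun i => truncZero (x i / h), norm_le_norm_of_forall_abs_le fun i => ?_,
    norm_le_sqrt_card_mul fun i => ?_⟩
  · calc |(truncZero (x i / h) : ℝ) * h| ≤ |x i / h| * h := by
          rw [abs_mul, abs_of_pos hh]
          exact mul_le_mul_of_nonneg_right (abs_truncZero_le _) hh.le
      _ = |x i| := by rw [abs_div, abs_of_pos hh, div_mul_cancel₀ _ hh.ne']
  · calc |x i - (truncZero (x i / h) : ℝ) * h| = |x i / h - truncZero (x i / h)| * h := by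
          rw [← abs_of_pos hh, ← abs_mul, abs_of_pos hh, sub_mul, div_mul_cancel₀ _ hh.ne']
      _ ≤ h := mul_le_of_le_one_left hh.le (abs_sub_truncZero_le _)

end EuclideanSpace

namespace HSBM

theorem exists_grid_point_near {n : ℕ} {δ : ℝ} (hδ : 0 < δ) (x : EuclideanSpace ℝ (Fin n)) :
    ∃ y : EuclideanSpace ℝ (Fin n),
      (∀ i, ∃ z : ℤ, √n * y i / δ = z) ∧ ‖y‖ ≤ ‖x‖ ∧ ‖x - y‖ ≤ δ := by
  rcases n.eq_zero_or_pos with rfl | hn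
  · exact ⟨x, fun i => i.elim0, le_rfl, by simpa using hδ.le⟩
  have hs : 0 < √(n : ℝ) := Real.sqrt_pos.mpr (by exact_mod_cast hn)
  obtain ⟨z, hy, hxy⟩ := EuclideanSpace.exists_lattice_point_near (div_pos hδ hs) x
  refine ⟨_, fun i => ⟨z i, ?_⟩, hy, ?_⟩
  · field_simp
  · simpa [mul_div_cancel₀ _ hs.ne'] using hxy

def gridQuadValues {n : ℕ} (C : Matrix (Fin n) (Fin n) ℝ) (δ : ℝ) : Set ℝ :=
  {r : ℝ | ∃ x : Fin n → ℝ, (∑ i, x i ^ 2 ≤ 1) ∧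
    (∀ i, ∃ z : ℤ, Real.sqrt n * x i / δ = (z : ℝ)) ∧ r = |x ⬝ᵥ C.mulVec x|}

section gridQuadValues

variable {n : ℕ} (C : Matrix (Fin n) (Fin n) ℝ) (δ : ℝ)

theorem dotProduct_mulVec_self_eq_inner (x : EuclideanSpace ℝ (Fin n)) :
    x ⬝ᵥ C *ᵥ x = inner ℝ (toEuclideanCLM (𝕜 := ℝ) C x) x := by
  rw [real_inner_comm, inner_toEuclideanCLM]

theorem abs_inner_mem_gridQuadValues {y : EuclideanSpace ℝ (Fin n)} (hy : ‖y‖ ≤ 1)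
    (hgrid : ∀ i, ∃ z : ℤ, √n * y i / δ = z) :
    |inner ℝ (toEuclideanCLM (𝕜 := ℝ) C y) y| ∈ gridQuadValues C δ := by
  refine ⟨y, ?_, hgrid, by rw [dotProduct_mulVec_self_eq_inner]⟩
  rw [← EuclideanSpace.real_norm_sq_eq]
  exact pow_le_one₀ (norm_nonneg y) hy

theorem bddAbove_gridQuadValues : BddAbove (gridQuadValues C δ) := by
  refine ⟨specNorm C, ?_⟩
  rintro r ⟨x, hx, -, rfl⟩
  have h := (toEuclideanCLM (𝕜 := ℝ) C).abs_inner_apply_self_le (WithLp.toLp 2 x)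
  rw [EuclideanSpace.real_norm_sq_eq, ← dotProduct_mulVec_self_eq_inner] at h
  exact h.trans (mul_le_of_le_one_right (norm_nonneg _) hx)

theorem sSup_gridQuadValues_nonneg : 0 ≤ sSup (gridQuadValues C δ) :=
  le_csSup (bddAbove_gridQuadValues C δ)
    (by simpa using abs_inner_mem_gridQuadValues C δ (y := 0) (by simp) fun _ => ⟨0, by simp⟩)

theorem abs_inner_le_sSup_gridQuadValues_add (hδ : 0 < δ)
    {x : EuclideanSpace ℝ (Fin n)} (hx : ‖x‖ ≤ 1) :
    |inner ℝ (toEuclideanCLM (𝕜 := ℝ) C x) x| ≤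
      sSup (gridQuadValues C δ) + 2 * δ * specNorm C := by
  set T := toEuclideanCLM (𝕜 := ℝ) C
  obtain ⟨y, hgrid, hy, hxy⟩ := exists_grid_point_near hδ x
  have hTy : |inner ℝ (T y) y| ≤ sSup (gridQuadValues C δ) :=
    le_csSup (bddAbove_gridQuadValues C δ) (abs_inner_mem_gridQuadValues C δ (hy.trans hx) hgrid)
  have hdiff : ‖T‖ * (‖x‖ + ‖y‖) * ‖x - y‖ ≤ ‖T‖ * 2 * δ := by
    gcongr; linarith
  have := T.abs_inner_apply_self_sub_le x y
  rw [specNorm]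
  linarith [abs_sub_abs_le_abs_sub (inner ℝ (T x) x) (inner ℝ (T y) y)]

end gridQuadValues

/-- spectral norm bound via a discretization grid. -/
theorem statement11 (n : ℕ) (C : Matrix (Fin n) (Fin n) ℝ) (hC : C.IsSymm)
    (δ : ℝ) (hδ0 : 0 < δ) (hδ1 : δ < 1 / 3) :
    specNorm C ≤ (1 - 3 * δ)⁻¹ *
      sSup {r : ℝ | ∃ x : Fin n → ℝ, (∑ i, x i ^ 2 ≤ 1) ∧
        (∀ i, ∃ z : ℤ, Real.sqrt n * x i / δ = (z : ℝ)) ∧ r = |x ⬝ᵥ C.mulVec x|} := by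
  change specNorm C ≤ (1 - 3 * δ)⁻¹ * sSup (gridQuadValues C δ)
  have hT : (toEuclideanCLM (𝕜 := ℝ) C).IsSymmetric :=
    isSymmetric_toEuclideanLin_iff.mpr (isHermitian_iff_isSymm.mpr hC)
  have hnorm : specNorm C ≤ sSup (gridQuadValues C δ) + 2 * δ * specNorm C :=
    ContinuousLinearMap.norm_le_of_forall_norm_eq_one_abs_re_inner_le hT
      (add_nonneg (sSup_gridQuadValues_nonneg C δ) (by unfold specNorm; positivity))
      fun x hx => by simpa using abs_inner_le_sSup_gridQuadValues_add C δ hδ0 hx.le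
  have hpos : 0 ≤ specNorm C := norm_nonneg _
  rw [← div_eq_inv_mul, le_div_iff₀ (by linarith)]
  nlinarith

end HSBM
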